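/- Let a, b be elements of a unital C*-algebra A. Then a ⊥_B^v b if and only if v(a + λb)² ≥ v(a)² + |λ|²·C(b)² for all λ ∈ ℂ, where C(b) = inf over states φ of |φ(b)|. -/

import Mathlib

open scoped ComplexOrder

/-- A state on a unital C*-algebra: a positive linear functional with `φ 1 = 1` and norm 1. -/
def IsState (A : Type*) [CStarAlgebra A] (φ : A →L[ℂ] ℂ) : Prop :=
  (∀ a : A, 0 ≤ φ (star a * a)) ∧ φ 1 = 1 ∧ ‖φ‖ = 1

/-- The numerical radius `v(a) = sup {|φ(a)| : φ a state}`. -/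
noncomputable def nr {A : Type*} [CStarAlgebra A] (a : A) : ℝ :=
  sSup {r : ℝ | ∃ φ : A →L[ℂ] ℂ, IsState A φ ∧ r = ‖φ a‖}

/-- The numerical radius Crawford number `C(b) = inf {|φ(b)| : φ a state}`. -/
noncomputable def crawford {A : Type*} [CStarAlgebra A] (b : A) : ℝ :=
  sInf {r : ℝ | ∃ φ : A →L[ℂ] ℂ, IsState A φ ∧ r = ‖φ b‖}

/-- Numerical radius Birkhoff--James orthogonality: `v(a + λ b) ≥ v(a)` for all `λ ∈ ℂ`. -/
def nrOrth {A : Type*} [CStarAlgebra A] (a b : A) : Prop :=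
  ∀ lam : ℂ, nr a ≤ nr (a + lam • b)

/-- Birkhoff--James orthogonality: `‖a + λ b‖ ≥ ‖a‖` for all `λ ∈ ℂ`. -/
def bjOrth {A : Type*} [CStarAlgebra A] (a b : A) : Prop :=
  ∀ lam : ℂ, ‖a‖ ≤ ‖a + lam • b‖

variable {A : Type*} [CStarAlgebra A]

/-! The converse implication is immediate. For the direct one, fix `λ`. The state space is
weak-* compact, so `v(c)` is the maximum of `|φ(c)|` over states. Orthogonality says that
`t ↦ v(a + tλb)` is smallest at `t = 0`; by compactness this first-order condition is witnessed
by a single state `φ` with `|φ(a)| = v(a)` and `Re (conj φ(a) · λφ(b)) ≥ 0` (the real inner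
product `⟪φ a, λ φ b⟫` on `ℂ`). Expanding `|φ(a) + λφ(b)|²` then gives
`v(a + λb)² ≥ v(a)² + |λ|²|φ(b)|² ≥ v(a)² + |λ|² C(b)²`. -/

open scoped RealInnerProductSpace

section InnerProductSpace

variable {E : Type*} [NormedAddCommGroup E] [InnerProductSpace ℝ E]

lemma le_inner_of_norm_le_norm_add_smul {x y : E} {t : ℝ} (ht : 0 < t)
    (hle : ‖x‖ ≤ ‖x + t • y‖) : -(t * ‖y‖ ^ 2) / 2 ≤ ⟪x, y⟫ := by
  have hexp := norm_add_sq_real x (t • y)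
  rw [real_inner_smul_right, norm_smul, Real.norm_of_nonneg ht.le] at hexp
  have hsq : ‖x‖ ^ 2 ≤ ‖x + t • y‖ ^ 2 := pow_le_pow_left₀ (norm_nonneg _) hle 2
  have : 0 ≤ t * (2 * ⟪x, y⟫ + t * ‖y‖ ^ 2) := by nlinarith
  linarith [nonneg_of_mul_nonneg_right this ht]

theorem IsCompact.exists_isMaxOn_norm_inner_nonneg {X : Type*} [TopologicalSpace X] {S : Set X}
    (hS : IsCompact S) {F G : X → E} (hF : Continuous F) (hG : Continuous G)
    (h : ∀ t : ℝ, 0 < t → ∃ s ∈ S, ∀ s' ∈ S, ‖F s'‖ ≤ ‖F s + t • G s‖) :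
    ∃ s ∈ S, IsMaxOn (‖F ·‖) S s ∧ 0 ≤ ⟪F s, G s⟫ := by
  obtain ⟨s₁, hs₁, -⟩ := h 1 one_pos
  obtain ⟨s₀, hs₀, hmax⟩ := hS.exists_isMaxOn ⟨s₁, hs₁⟩ hF.norm.continuousOn
  obtain ⟨B, hB⟩ := hS.exists_bound_of_continuousOn hG.continuousOn
  set m := ‖F s₀‖
  -- `d ≤ 0` exactly at the points we are looking for
  set d : X → ℝ := fun x => max (m - ‖F x‖) (-⟪F x, G x⟫)
  have hd : Continuous d := by fun_prop
  -- a maximiser of `‖F + t • G‖` for small `t > 0` makes `d` small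
  have hsmall : ∀ ε > 0, ∃ s ∈ S, d s ≤ ε := by
    intro ε hε
    set M := max B 1
    set t := ε / M ^ 2
    have ht : 0 < t := by positivity
    obtain ⟨s, hs, hst⟩ := h t ht
    have hGs : ‖G s‖ ≤ M := le_max_of_le_left (hB s hs)
    have htM : t * M ^ 2 = ε := div_mul_cancel₀ ε (by positivity)
    have hMM : M ≤ M ^ 2 := le_self_pow₀ (le_max_right B 1) two_ne_zero
    have htG : t * ‖G s‖ ≤ ε := htM ▸ by gcongr; exact hGs.trans hMM
    have htG2 : t * ‖G s‖ ^ 2 ≤ ε := htM ▸ by gcongr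
    have hm : m ≤ ‖F s + t • G s‖ := hst s₀ hs₀
    refine ⟨s, hs, max_le ?_ ?_⟩
    · have htri := norm_add_le (F s) (t • G s)
      rw [norm_smul, Real.norm_of_nonneg ht.le] at htri
      linarith
    · linarith [le_inner_of_norm_le_norm_add_smul ht ((isMaxOn_iff.mp hmax s hs).trans hm)]
  obtain ⟨s, hs, hmin⟩ := hS.exists_isMinOn ⟨s₀, hs₀⟩ hd.continuousOn
  have hds : d s ≤ 0 := le_of_forall_pos_le_add fun ε hε => by
    obtain ⟨s', hs', hs'ε⟩ := hsmall ε hε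
    linarith [isMinOn_iff.mp hmin s' hs']
  obtain ⟨hFs, hinner⟩ := max_le_iff.mp hds
  exact ⟨s, hs, isMaxOn_iff.mpr fun x hx => (isMaxOn_iff.mp hmax x hx).trans (by linarith),
    by linarith⟩

end InnerProductSpace

namespace IsState

variable {φ : A →L[ℂ] ℂ}

lemma norm_apply_le (hφ : IsState A φ) (c : A) : ‖φ c‖ ≤ ‖c‖ := by
  simpa [hφ.2.2] using φ.le_opNorm c

lemma norm_apply_le_nr (hφ : IsState A φ) (c : A) : ‖φ c‖ ≤ nr c :=
  le_csSup ⟨‖c‖, by rintro r ⟨ψ, hψ, rfl⟩; exact hψ.norm_apply_le c⟩ ⟨φ, hφ, rfl⟩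

lemma crawford_le_norm_apply (hφ : IsState A φ) (c : A) : crawford c ≤ ‖φ c‖ :=
  csInf_le ⟨0, by rintro r ⟨ψ, -, rfl⟩; exact norm_nonneg _⟩ ⟨φ, hφ, rfl⟩

lemma nr_eq_norm_apply (hφ : IsState A φ) {c : A}
    (hmax : ∀ ψ, IsState A ψ → ‖ψ c‖ ≤ ‖φ c‖) : nr c = ‖φ c‖ :=
  IsGreatest.csSup_eq ⟨⟨φ, hφ, rfl⟩, by rintro r ⟨ψ, hψ, rfl⟩; exact hmax ψ hψ⟩

end IsState

lemma nr_nonneg (c : A) : 0 ≤ nr c :=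
  Real.sSup_nonneg (by rintro r ⟨φ, -, rfl⟩; exact norm_nonneg _)

lemma crawford_nonneg (c : A) : 0 ≤ crawford c :=
  Real.sInf_nonneg (by rintro r ⟨φ, -, rfl⟩; exact norm_nonneg _)

lemma crawford_eq_zero_of_forall_not_isState (h : ∀ φ, ¬IsState A φ) (c : A) :
    crawford c = 0 := by
  have hempty : {r : ℝ | ∃ φ : A →L[ℂ] ℂ, IsState A φ ∧ r = ‖φ c‖} = ∅ :=
    Set.eq_empty_of_forall_notMem fun r ⟨φ, hφ, _⟩ => h φ hφ
  rw [crawford, hempty, Real.sInf_empty]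

lemma isState_iff_mem_closedBall {φ : WeakDual ℂ A} :
    IsState A φ ↔ WeakDual.toStrongDual φ ∈ Metric.closedBall 0 1 ∧
      (∀ x : A, 0 ≤ φ (star x * x)) ∧ φ 1 = 1 := by
  rw [mem_closedBall_zero_iff]
  refine ⟨fun ⟨hpos, hone, hnorm⟩ => ⟨hnorm.le, hpos, hone⟩,
    fun ⟨hnorm, hpos, hone⟩ => ⟨hpos, hone, hnorm.antisymm ?_⟩⟩
  have : Nontrivial A := nontrivial_of_ne 1 0 fun h => by simp [h] at hone
  have hle := (WeakDual.toStrongDual φ).le_opNorm 1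
  rwa [show WeakDual.toStrongDual φ 1 = 1 from hone, norm_one, norm_one, mul_one] at hle

theorem isCompact_setOf_isState : IsCompact {φ : WeakDual ℂ A | IsState A φ} := by
  simp only [isState_iff_mem_closedBall, Set.ofPred_and, Set.ofPred_forall]
  refine (WeakDual.isCompact_closedBall 0 1).inter_right
    ((isClosed_iInter fun x => isClosed_le continuous_const (WeakDual.eval_continuous _)).inter
      (isClosed_eq (WeakDual.eval_continuous 1) continuous_const))

lemma exists_isState_norm_eq_nr (hne : ∃ φ, IsState A φ) (c : A) :
    ∃ φ, IsState A φ ∧ ‖φ c‖ = nr c := by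
  obtain ⟨φ, hφ, hmax⟩ := isCompact_setOf_isState.exists_isMaxOn hne
    (continuous_norm.comp (WeakDual.eval_continuous c)).continuousOn
  exact ⟨φ, hφ, (hφ.nr_eq_norm_apply fun ψ hψ => isMaxOn_iff.mp hmax ψ hψ).symm⟩

lemma exists_isState_of_nrOrth {a b : A} (h : nrOrth a b) (hne : ∃ φ, IsState A φ) (lam : ℂ) :
    ∃ φ, IsState A φ ∧ ‖φ a‖ = nr a ∧ 0 ≤ ⟪φ a, lam * φ b⟫ := by
  have hgrow : ∀ t : ℝ, 0 < t → ∃ φ ∈ {φ : WeakDual ℂ A | IsState A φ},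
      ∀ ψ ∈ {φ : WeakDual ℂ A | IsState A φ}, ‖ψ a‖ ≤ ‖φ a + t • (lam * φ b)‖ := by
    intro t _
    obtain ⟨φ, hφ, hnr⟩ := exists_isState_norm_eq_nr hne (a + ((t : ℂ) * lam) • b)
    refine ⟨φ, hφ, fun ψ hψ => ?_⟩
    calc ‖ψ a‖ ≤ nr a := IsState.norm_apply_le_nr hψ a
      _ ≤ nr (a + ((t : ℂ) * lam) • b) := h _
      _ = ‖φ a + t • (lam * φ b)‖ := by
        rw [← hnr, map_add, map_smul, smul_eq_mul, Complex.real_smul, mul_assoc]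
  obtain ⟨φ, hφ, hmax, hinner⟩ := isCompact_setOf_isState.exists_isMaxOn_norm_inner_nonneg
    (WeakDual.eval_continuous a) (continuous_const.mul (WeakDual.eval_continuous b)) hgrow
  exact ⟨φ, hφ, (hφ.nr_eq_norm_apply fun ψ hψ => isMaxOn_iff.mp hmax ψ hψ).symm, hinner⟩

lemma sq_nr_add_smul_le_of_nrOrth {a b : A} (h : nrOrth a b) (lam : ℂ) :
    nr a ^ 2 + ‖lam‖ ^ 2 * crawford b ^ 2 ≤ nr (a + lam • b) ^ 2 := by
  by_cases hne : ∃ φ, IsState A φ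
  · obtain ⟨φ, hφ, ha, hinner⟩ := exists_isState_of_nrOrth h hne lam
    have hb : crawford b ^ 2 ≤ ‖φ b‖ ^ 2 :=
      pow_le_pow_left₀ (crawford_nonneg b) (hφ.crawford_le_norm_apply b) 2
    calc nr a ^ 2 + ‖lam‖ ^ 2 * crawford b ^ 2
        ≤ ‖φ a‖ ^ 2 + 2 * ⟪φ a, lam * φ b⟫ + ‖lam * φ b‖ ^ 2 := by
          rw [ha, norm_mul, mul_pow]
          nlinarith [mul_le_mul_of_nonneg_left hb (sq_nonneg ‖lam‖)]
      _ = ‖φ (a + lam • b)‖ ^ 2 := by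
          rw [← norm_add_sq_real, map_add, map_smul, smul_eq_mul]
      _ ≤ nr (a + lam • b) ^ 2 :=
          pow_le_pow_left₀ (norm_nonneg _) (hφ.norm_apply_le_nr _) 2
  · rw [crawford_eq_zero_of_forall_not_isState (not_exists.mp hne) b]
    simpa using pow_le_pow_left₀ (nr_nonneg a) (h lam) 2

theorem stmt15 (a b : A) :
    nrOrth a b ↔
      ∀ lam : ℂ, nr a ^ 2 + ‖lam‖ ^ 2 * crawford b ^ 2 ≤ nr (a + lam • b) ^ 2 := by
  refine ⟨fun h lam => sq_nr_add_smul_le_of_nrOrth h lam, fun h lam => ?_⟩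
  have hsq : nr a ^ 2 ≤ nr (a + lam • b) ^ 2 :=
    le_of_add_le_of_nonneg_left (h lam) (by positivity)
  exact le_of_pow_le_pow_left₀ two_ne_zero (nr_nonneg _) hsq
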